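/- A simplicial set X is stiff if and only if for all 0 ≤ i ≤ n the following square is a pullback of sets: top map s_i : X_n → X_{n+1}; right map (d_⊥)^i(d_⊤)^{n−i} : X_{n+1} → X_1; bottom map s_0 : X_0 → X_1; left map (d_⊥)^i(d_⊤)^{n−i} : X_n → X_0. (Here d_⊥ and d_⊤ denote the bottom and top face maps.) -/

import Mathlib

open CategoryTheory CategoryTheory.Limits Simplicial Opposite

/-- A map in the simplex category is *generic* if it preserves the endpoints. -/
def IsGeneric {a b : SimplexCategory} (g : a ⟶ b) : Prop :=
  g.toOrderHom 0 = 0 ∧ g.toOrderHom (Fin.last a.len) = Fin.last b.len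

/-- A map in the simplex category is *free* if it is distance preserving. -/
def IsFree {a b : SimplexCategory} (f : a ⟶ b) : Prop :=
  ∀ i : Fin (a.len + 1), (f.toOrderHom i : ℕ) = (f.toOrderHom 0 : ℕ) + (i : ℕ)

/-- A decomposition space is a simplicial set carrying every pushout in `Δ` of a
generic map `g` along a free map `f` to a pullback of sets. -/
def IsDecomposition (X : SSet) : Prop :=
  ∀ ⦃a b c d : SimplexCategory⦄ (g : a ⟶ b) (f : a ⟶ c) (h : b ⟶ d) (k : c ⟶ d),
    IsGeneric g → IsFree f → IsPushout g f h k →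
    IsPullback (X.map h.op) (X.map k.op) (X.map g.op) (X.map f.op)

/-- A simplicial set is *complete* if all degeneracy maps are injective. -/
def Complete (X : SSet) : Prop :=
  ∀ (n : ℕ) (i : Fin (n + 1)), Function.Injective (X.σ i : X _⦋n⦌ ⟶ X _⦋n + 1⦌)

/-- The free map `[1] → [n]` sending `0, 1` to `i, i+1`; it induces the map
taking the `i`-th principal edge (`0`-indexed) of an `n`-simplex. -/
def principalEdge (n : ℕ) (i : Fin n) : (⦋1⦌ : SimplexCategory) ⟶ ⦋n⦌ :=
  SimplexCategory.mkHom
    { toFun := fun j => ⟨i.1 + j.1, by have := i.2; have := j.2; omega⟩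
      monotone' := fun a b h => by
        simp only [Fin.mk_le_mk]
        exact Nat.add_le_add_left h i.1 }

/-- The unique generic map `[1] → [n]` (`0 ↦ 0`, `1 ↦ n`); it induces the map
taking the long edge of an `n`-simplex. -/
def longEdgeMap (n : ℕ) : (⦋1⦌ : SimplexCategory) ⟶ ⦋n⦌ :=
  SimplexCategory.mkHom
    { toFun := fun j => ⟨j.1 * n, by
        have h := j.2
        have : j.1 * n ≤ 1 * n := Nat.mul_le_mul_right n (by omega)
        omega⟩
      monotone' := fun a b h => by
        simp only [Fin.mk_le_mk]
        exact Nat.mul_le_mul_right n h }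

/-- The alphabet `{0, 1, a}`: `z` prescribes a degenerate principal edge, `o` an
unrestricted one, `a` a nondegenerate one. -/
inductive Letter where
  | z
  | o
  | a : Letter
  deriving DecidableEq

/-- The subset of `X₁` prescribed by a letter. -/
def edgeSet (X : SSet) : Letter → Set (X _⦋1⦌) := fun l => match l with
  | .z => Set.range (X.σ (0 : Fin 1))
  | .o => Set.univ
  | .a => (Set.range (X.σ (0 : Fin 1)))ᶜ

/-- `X_w`, the set of `n`-simplices whose principal edges have the types
prescribed by the word `w`. -/
def wordSet (X : SSet) {n : ℕ} (w : Fin n → Letter) : Set (X _⦋n⦌) :=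
  {σ | ∀ i : Fin n, X.map (principalEdge n i).op σ ∈ edgeSet X (w i)}

/-- A simplex is *effective* if all its principal edges are nondegenerate. -/
def Effective (X : SSet) {n : ℕ} (σ : X _⦋n⦌) : Prop :=
  ∀ i : Fin n, X.map (principalEdge n i).op σ ∉ Set.range (X.σ (0 : Fin 1))

/-- The constant word `aa⋯a`. -/
def allA (n : ℕ) : Fin n → Letter := fun _ => Letter.a

/-- Concatenation of words. -/
def concatW {m n : ℕ} (v : Fin m → Letter) (v' : Fin n → Letter) : Fin (m + n) → Letter :=
  fun i => if h : i.1 < m then v ⟨i.1, h⟩ else v' ⟨i.1 - m, by have := i.2; omega⟩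

/-- The word `v ℓ v'` obtained by splicing a letter `ℓ` between the words `v` and `v'`. -/
def splice {m n : ℕ} (v : Fin m → Letter) (l : Letter) (v' : Fin n → Letter) :
    Fin (m + n + 1) → Letter :=
  fun i => if h : i.1 < m then v ⟨i.1, h⟩
    else if h2 : i.1 = m then l
    else v' ⟨i.1 - (m + 1), by have := i.2; omega⟩

/-- A simplex (of positive dimension) is degenerate if it is in the image of some
degeneracy map. -/
def Degen (X : SSet) {n : ℕ} (σ : X _⦋n + 1⦌) : Prop :=
  ∃ i : Fin (n + 1), σ ∈ Set.range (X.σ i)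

/-- A simplicial map is *cULF* if its naturality squares on all generic maps are
pullbacks. -/
def IsCULF {Y X : SSet} (f : Y ⟶ X) : Prop :=
  ∀ ⦃a b : SimplexCategory⦄ (g : a ⟶ b), IsGeneric g →
    IsPullback (f.app (op b)) (Y.map g.op) (X.map g.op) (f.app (op a))

/-- A simplicial map is *conservative* if its naturality squares on all degeneracy
maps are pullbacks. -/
def Conservative {Y X : SSet} (f : Y ⟶ X) : Prop :=
  ∀ (n : ℕ) (i : Fin (n + 1)),
    IsPullback (f.app (op (SimplexCategory.mk n))) (Y.σ i) (X.σ i)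
      (f.app (op (SimplexCategory.mk (n + 1))))

/-- A simplicial set is *stiff* if it carries every pushout in `Δ` of a codegeneracy
map along a free map to a pullback of sets. -/
def Stiff (X : SSet) : Prop :=
  ∀ (k : ℕ) (i : Fin (k + 1)) ⦃c d : SimplexCategory⦄
    (f : SimplexCategory.mk (k + 1) ⟶ c) (h : SimplexCategory.mk k ⟶ d) (j : c ⟶ d),
    IsFree f → IsPushout (SimplexCategory.σ i) f h j →
    IsPullback (X.map h.op) (X.map j.op) (X.map (SimplexCategory.σ i).op) (X.map f.op)

/-- The map `[0] → [n]` picking out the vertex `i`. -/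
def vertexMap (n : ℕ) (i : Fin (n + 1)) : (⦋0⦌ : SimplexCategory) ⟶ ⦋n⦌ :=
  SimplexCategory.mkHom ⟨fun _ => i, fun _ _ _ => le_refl _⟩

/-- The unique map `[n] → [0]`; it induces the iterated degeneracy `X₀ → Xₙ`. -/
def toZero (n : ℕ) : (⦋n⦌ : SimplexCategory) ⟶ ⦋0⦌ :=
  SimplexCategory.mkHom ⟨fun _ => 0, fun _ _ _ => le_refl _⟩

/-- The generic map `[2] → [m+n]` sending `0,1,2` to `0,m,m+n`. -/
def midMap (m n : ℕ) : (⦋2⦌ : SimplexCategory) ⟶ ⦋m + n⦌ :=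
  SimplexCategory.mkHom
    { toFun := fun j => ⟨if j.1 = 0 then 0 else if j.1 = 1 then m else m + n, by
        split
        · omega
        · split <;> omega⟩
      monotone' := by
        intro a b hab
        have h : a.1 ≤ b.1 := hab
        have ha := a.2
        have hb := b.2
        simp only [Fin.mk_le_mk]
        split <;> split <;> (try split) <;> (try split) <;> omega }

/-- The free map `[m] → [m+n]` onto the initial segment. -/
def freeInitial (m n : ℕ) : (⦋m⦌ : SimplexCategory) ⟶ ⦋m + n⦌ :=
  SimplexCategory.mkHom ⟨fun i => ⟨i.1, by have := i.2; omega⟩, fun a b h => h⟩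

/-- The free map `[n] → [m+n]` onto the final segment. -/
def freeFinal (m n : ℕ) : (⦋n⦌ : SimplexCategory) ⟶ ⦋m + n⦌ :=
  SimplexCategory.mkHom ⟨fun i => ⟨m + i.1, by have := i.2; omega⟩,
    fun a b h => by
      simp only [Fin.mk_le_mk]
      exact Nat.add_le_add_left h m⟩

/-- The word `1aa⋯a` (`n` letters `a`). -/
def oneA (n : ℕ) : Fin (n + 1) → Letter := fun i => if i.1 = 0 then Letter.o else Letter.a

/-- The word `0aa⋯a` (`n` letters `a`). -/
def zeroA (n : ℕ) : Fin (n + 1) → Letter := fun i => if i.1 = 0 then Letter.z else Letter.a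

/-- The word `aa⋯a1` (`n` letters `a`). -/
def aOne (n : ℕ) : Fin (n + 1) → Letter := fun i => if i.1 = n then Letter.o else Letter.a

/-- The word `aa⋯a0` (`n` letters `a`). -/
def aZero (n : ℕ) : Fin (n + 1) → Letter := fun i => if i.1 = n then Letter.z else Letter.a

/-- The number of letters `0` in a word. -/
def zcount {n : ℕ} (w : Fin n → Letter) : ℕ :=
  (Finset.univ.filter fun i => w i = Letter.z).card

/-- The surjection `[n] → [n - zcount w]` collapsing, for each position `j` with
`w j = 0`, the vertex `j+1` onto the vertex `j`; the induced map
`X_{n - zcount w} → X_n` is the iterated degeneracy `s_{j_k} ⋯ s_{j_1}` where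
`j_1 < ⋯ < j_k` are the positions of the letters `0` of `w`. -/
def collapseMap {n : ℕ} (w : Fin n → Letter) :
    (⦋n⦌ : SimplexCategory) ⟶ ⦋n - zcount w⦌ :=
  SimplexCategory.mkHom
    { toFun := fun t =>
        ⟨(Finset.univ.filter fun i : Fin n => i.1 < t.1 ∧ ¬ (w i = Letter.z)).card, by
          have h2 := Finset.card_filter_add_card_filter_not
            (s := (Finset.univ : Finset (Fin n))) (p := fun i => w i = Letter.z)
          have h1 : (Finset.univ.filter fun i : Fin n => i.1 < t.1 ∧ ¬ (w i = Letter.z)).card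
              ≤ (Finset.univ.filter fun i : Fin n => ¬ (w i = Letter.z)).card :=
            Finset.card_le_card (fun x hx => by
              simp only [Finset.mem_filter] at hx ⊢
              exact ⟨hx.1, hx.2.2⟩)
          have h3 : zcount w = (Finset.univ.filter fun i : Fin n => w i = Letter.z).card := rfl
          simp only [Finset.card_univ, Fintype.card_fin] at h2
          omega⟩
      monotone' := by
        intro a b hab
        have h : a.1 ≤ b.1 := hab
        simp only [Fin.mk_le_mk]
        exact Finset.card_le_card (fun x hx => by
          simp only [Finset.mem_filter] at hx ⊢
          exact ⟨hx.1, lt_of_lt_of_le hx.2.1 h, hx.2.2⟩) }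

/-- An edge has finite length if there is a bound on the dimensions of the effective
simplices having it as long edge. -/
def FiniteLength (X : SSet) (a : X _⦋1⦌) : Prop :=
  ∃ N : ℕ, ∀ (n : ℕ) (σ : X _⦋n⦌), Effective X σ →
    X.map (longEdgeMap n).op σ = a → n ≤ N

/-- A *tight* decomposition space: a complete decomposition space in which every edge
has finite length. -/
def Tight (X : SSet) : Prop :=
  IsDecomposition X ∧ Function.Injective (X.σ (0 : Fin 1) : X _⦋0⦌ ⟶ X _⦋1⦌) ∧
    ∀ a : X _⦋1⦌, FiniteLength X a

/-- The length of an edge: the supremum of the dimensions of effective simplices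
having it as long edge. -/
noncomputable def edgeLength (X : SSet) (a : X _⦋1⦌) : ℕ :=
  sSup (Set.ofPred fun n : ℕ => ∃ σ : X _⦋n⦌, Effective X σ ∧ X.map (longEdgeMap n).op σ = a)

/-- A complete simplicial set is *split* if all face maps preserve nondegenerate
simplices. -/
def Split (X : SSet) : Prop :=
  Complete X ∧ ∀ (n : ℕ) (i : Fin (n + 3)) (σ : X _⦋n + 2⦌),
    ¬ Degen X σ → ¬ Degen X (X.δ i σ)

/-- The counit: the indicator function of the degenerate edges. -/
noncomputable def epsFun (X : SSet) : X _⦋1⦌ → ℚ := fun f =>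
  haveI := Classical.propDecidable (f ∈ Set.range (X.σ (0 : Fin 1)))
  if f ∈ Set.range (X.σ (0 : Fin 1)) then 1 else 0

/-- Convolution product on `ℚ`-valued functions on `X₁`. -/
noncomputable def convFun (X : SSet) (φ ψ : X _⦋1⦌ → ℚ) : X _⦋1⦌ → ℚ :=
  fun f => ∑ᶠ σ ∈ (fun τ => X.δ (1 : Fin 3) τ) ⁻¹' {f},
    φ (X.δ (2 : Fin 3) σ) * ψ (X.δ (0 : Fin 3) σ)

/-- The Möbius function `Φ_even - Φ_odd`. -/
noncomputable def muFun (X : SSet) : X _⦋1⦌ → ℚ :=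
  fun f => ∑ᶠ n : ℕ, (-1 : ℚ) ^ n *
    (Nat.card {σ : X.obj (op (SimplexCategory.mk n)) // Effective X σ ∧ X.map (longEdgeMap n).op σ = f} : ℚ)

/-- The category `Δ_inj`: objects those of the simplex category, morphisms the
injective monotone maps. -/
structure DeltaInj : Type where
  /-- the underlying object of the simplex category -/
  obj : SimplexCategory

instance : Category DeltaInj where
  Hom a b := {f : a.obj ⟶ b.obj // Function.Injective f.toOrderHom}
  id a := ⟨𝟙 a.obj, by
    rw [SimplexCategory.id_toOrderHom]
    exact fun x y h => h⟩
  comp f g := ⟨f.1 ≫ g.1, by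
    rw [SimplexCategory.comp_toOrderHom]
    exact fun x y h => f.2 (g.2 h)⟩
  id_comp f := by apply Subtype.ext; simp
  comp_id f := by apply Subtype.ext; simp
  assoc f g h := by apply Subtype.ext; simp

/-- The inclusion functor `Δ_inj ⊆ Δ`. -/
def DeltaInj.incl : DeltaInj ⥤ SimplexCategory where
  obj a := a.obj
  map f := f.1

/-- A *semi-decomposition space*: a semi-simplicial set carrying every pushout in
`Δ_inj` of a generic (inner) face map along a free (outer) face map to a pullback. -/
def IsSemiDecomposition (Z : DeltaInjᵒᵖ ⥤ Type) : Prop :=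
  ∀ ⦃a b c d : DeltaInj⦄ (g : a ⟶ b) (f : a ⟶ c) (h : b ⟶ d) (k : c ⟶ d),
    IsGeneric g.1 → IsFree f.1 → IsPushout g f h k →
    IsPullback (Z.map h.op) (Z.map k.op) (Z.map g.op) (Z.map f.op)

/-- A map of semi-simplicial sets is *ULF* if its naturality squares on all generic
face maps are pullbacks. -/
def IsULF {Z W : DeltaInjᵒᵖ ⥤ Type} (φ : Z ⟶ W) : Prop :=
  ∀ ⦃a b : DeltaInj⦄ (g : a ⟶ b), IsGeneric g.1 →
    IsPullback (φ.app (op b)) (Z.map g.op) (W.map g.op) (φ.app (op a))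

lemma conservative_id (X : SSet) : Conservative (𝟙 X) := by
  intro n i
  exact IsPullback.of_horiz_isIso ⟨by simp⟩

lemma conservative_comp {X Y Z : SSet} {f : X ⟶ Y} {g : Y ⟶ Z}
    (hf : Conservative f) (hg : Conservative g) : Conservative (f ≫ g) := by
  intro n i
  simpa using IsPullback.paste_horiz (hf n i) (hg n i)

lemma isCULF_id (X : SSet) : IsCULF (𝟙 X) := by
  intro a b gm hgm
  exact IsPullback.of_horiz_isIso ⟨by simp⟩

lemma isCULF_comp {X Y Z : SSet} {f : X ⟶ Y} {g : Y ⟶ Z}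
    (hf : IsCULF f) (hg : IsCULF g) : IsCULF (f ≫ g) := by
  intro a b gm hgm
  simpa using IsPullback.paste_horiz (hf gm hgm) (hg gm hgm)

lemma isULF_id (Z : DeltaInjᵒᵖ ⥤ Type) : IsULF (𝟙 Z) := by
  intro a b gm hgm
  exact IsPullback.of_horiz_isIso ⟨by simp⟩

lemma isULF_comp {X Y Z : DeltaInjᵒᵖ ⥤ Type} {f : X ⟶ Y} {g : Y ⟶ Z}
    (hf : IsULF f) (hg : IsULF g) : IsULF (f ≫ g) := by
  intro a b gm hgm
  simpa using IsPullback.paste_horiz (hf gm hgm) (hg gm hgm)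

/-- The category of split simplicial sets and conservative maps. -/
structure SplitSSet : Type 1 where
  /-- the underlying simplicial set -/
  X : SSet.{0}
  split : Split X

instance : Category SplitSSet where
  Hom A B := {f : A.X ⟶ B.X // Conservative f}
  id A := ⟨𝟙 A.X, conservative_id A.X⟩
  comp f g := ⟨f.1 ≫ g.1, conservative_comp f.2 g.2⟩
  id_comp f := by apply Subtype.ext; simp
  comp_id f := by apply Subtype.ext; simp
  assoc f g h := by apply Subtype.ext; simp

/-- The forgetful functor from split simplicial sets to simplicial sets. -/
def SplitSSet.forget : SplitSSet ⥤ SSet where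
  obj A := A.X
  map f := f.1

/-- The category of split decomposition spaces and cULF maps. -/
structure SplitDecomp : Type 1 where
  /-- the underlying simplicial set -/
  X : SSet.{0}
  split : Split X
  decomp : IsDecomposition X

instance : Category SplitDecomp where
  Hom A B := {f : A.X ⟶ B.X // IsCULF f}
  id A := ⟨𝟙 A.X, isCULF_id A.X⟩
  comp f g := ⟨f.1 ≫ g.1, isCULF_comp f.2 g.2⟩
  id_comp f := by apply Subtype.ext; simp
  comp_id f := by apply Subtype.ext; simp
  assoc f g h := by apply Subtype.ext; simp

/-- The forgetful functor from split decomposition spaces to simplicial sets. -/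
def SplitDecomp.forget : SplitDecomp ⥤ SSet where
  obj A := A.X
  map f := f.1

/-- The category of semi-decomposition spaces and ULF maps. -/
structure SemiDecomp : Type 1 where
  /-- the underlying semi-simplicial set -/
  Z : DeltaInjᵒᵖ ⥤ Type
  semidecomp : IsSemiDecomposition Z

instance : Category SemiDecomp where
  Hom A B := {φ : A.Z ⟶ B.Z // IsULF φ}
  id A := ⟨𝟙 A.Z, isULF_id A.Z⟩
  comp f g := ⟨f.1 ≫ g.1, isULF_comp f.2 g.2⟩
  id_comp f := by apply Subtype.ext; simp
  comp_id f := by apply Subtype.ext; simp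
  assoc f g h := by apply Subtype.ext; simp

/-- The forgetful functor from semi-decomposition spaces to semi-simplicial sets. -/
def SemiDecomp.forget : SemiDecomp ⥤ (DeltaInjᵒᵖ ⥤ Type) where
  obj A := A.Z
  map f := f.1

/-!
A free map `[k+1] → [n+1]` is a shift `t ↦ m + t`, and its pushout along `σ_i` is the shift
`[k] → [n]` together with `σ_{m+i}`, the pushout property coming from the section `δ_{m+i}`.
Stiffness thus says that the squares formed by `s_{m+i} : X_n → X_{n+1}`, `s_i : X_k → X_{k+1}`
and restriction along the shifts are pullbacks. The squares of the statement are the case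
`k = 0`; conversely, stacking the square for `(k, m, i)` on the square of the statement for
`(k, i)` gives the square of the statement for `(n, m + i)`, so the pasting lemma applies.
-/

lemma CategoryTheory.IsPushout.isPullback_map_op_of_isPushout {C D : Type*} [Category C]
    [Category D] (F : Cᵒᵖ ⥤ D) {a b c d d' : C} {g : a ⟶ b} {f : a ⟶ c} {h : b ⟶ d}
    {j : c ⟶ d} {h' : b ⟶ d'} {j' : c ⟶ d'} (hpo : IsPushout g f h j)
    (hpo' : IsPushout g f h' j')
    (hF : IsPullback (F.map h'.op) (F.map j'.op) (F.map g.op) (F.map f.op)) :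
    IsPullback (F.map h.op) (F.map j.op) (F.map g.op) (F.map f.op) := by
  refine hF.of_iso (F.mapIso (hpo.isoIsPushout _ _ hpo').op) (Iso.refl _) (Iso.refl _)
    (Iso.refl _) ?_ ?_ (by simp) (by simp)
  · simp [← F.map_comp, ← op_comp]
  · simp [← F.map_comp, ← op_comp]

open SimplexCategory

lemma SimplexCategory.Hom.ext_val {a b : SimplexCategory} {f g : a ⟶ b}
    (H : ∀ t, (f.toOrderHom t : ℕ) = g.toOrderHom t) : f = g := by
  ext t : 3
  exact Fin.ext (H t)

lemma SimplexCategory.σ_apply_val {n : ℕ} (i : Fin (n + 1)) (t : Fin (n + 2)) :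
    ((σ i).toOrderHom t : ℕ) = if i.1 < t.1 then t.1 - 1 else t.1 := by
  show (i.predAbove t : ℕ) = _
  simp only [Fin.predAbove, Fin.lt_def, Fin.val_castSucc]
  split_ifs <;> simp

lemma SimplexCategory.δ_apply_val {n : ℕ} (i : Fin (n + 2)) (t : Fin (n + 1)) :
    ((δ i).toOrderHom t : ℕ) = if t.1 < i.1 then t.1 else t.1 + 1 := by
  show (i.succAbove t : ℕ) = _
  simp only [Fin.succAbove, Fin.lt_def, Fin.val_castSucc]
  split_ifs <;> simp

lemma SimplexCategory.σ_comp_δ_castSucc_comp {n : ℕ} {e : SimplexCategory} (p : Fin (n + 1))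
    (g : ⦋n + 1⦌ ⟶ e) (hg : g.toOrderHom p.castSucc = g.toOrderHom p.succ) :
    σ p ≫ δ p.castSucc ≫ g = g := by
  ext t : 3
  by_cases ht : t = p.castSucc
  · subst ht
    simpa [σ, δ] using hg.symm
  · simp [σ, δ, Fin.succAbove_predAbove ht]

def shiftMap (k m n : ℕ) (h : m + k ≤ n) : ⦋k⦌ ⟶ ⦋n⦌ :=
  mkHom ⟨fun t => ⟨m + t, by omega⟩, fun _ _ hab => by simpa using hab⟩

@[simp]
lemma shiftMap_apply_val {k m n : ℕ} (h : m + k ≤ n) (t : Fin (k + 1)) :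
    ((shiftMap k m n h).toOrderHom t : ℕ) = m + t := rfl

lemma isFree_shiftMap (k m n : ℕ) (h : m + k ≤ n) : IsFree (shiftMap k m n h) := fun _ => rfl

lemma IsFree.exists_eq_shiftMap {k n : ℕ} {f : ⦋k⦌ ⟶ ⦋n⦌} (hf : IsFree f) :
    ∃ m, ∃ h : m + k ≤ n, f = shiftMap k m n h := by
  have hlast := hf (Fin.last k)
  have hlt := (f.toOrderHom (Fin.last k)).isLt
  simp only [Fin.val_last, len_mk] at hlast hlt
  refine ⟨f.toOrderHom 0, by omega, Hom.ext_val fun t => ?_⟩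
  rw [hf t, shiftMap_apply_val]

lemma shiftMap_comp_shiftMap {k m n m' p : ℕ} (h : m + k ≤ n) (h' : m' + n ≤ p) :
    shiftMap k m n h ≫ shiftMap n m' p h' = shiftMap k (m' + m) p (by omega) :=
  Hom.ext_val fun t => by simp [Nat.add_assoc]

lemma principalEdge_eq_shiftMap (n : ℕ) (i : Fin n) :
    principalEdge n i = shiftMap 1 i n i.isLt := rfl

lemma vertexMap_eq_shiftMap (n : ℕ) (i : Fin (n + 1)) :
    vertexMap n i = shiftMap 0 i n (Nat.le_of_lt_succ i.isLt) :=
  Hom.ext_val fun t => by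
    have : (t : ℕ) = 0 := by have := t.isLt; simp only [len_mk] at this; omega
    simp only [shiftMap_apply_val, this, Nat.add_zero]
    rfl

lemma principalEdge_comp_shiftMap {k m n : ℕ} (i : Fin k) (h : m + k ≤ n) :
    principalEdge k i ≫ shiftMap k m n h = principalEdge n ⟨m + i, by omega⟩ := by
  rw [principalEdge_eq_shiftMap, principalEdge_eq_shiftMap, shiftMap_comp_shiftMap]

lemma vertexMap_comp_shiftMap {k m n : ℕ} (i : Fin (k + 1)) (h : m + k ≤ n) :
    vertexMap k i ≫ shiftMap k m n h = vertexMap n ⟨m + i, by omega⟩ := by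
  rw [vertexMap_eq_shiftMap, vertexMap_eq_shiftMap, shiftMap_comp_shiftMap]

lemma σ_comp_shiftMap {k m n : ℕ} (i : Fin (k + 1)) (h : m + k ≤ n) :
    σ i ≫ shiftMap k m n h =
      shiftMap (k + 1) m (n + 1) (by omega) ≫ σ ⟨m + i, by omega⟩ :=
  Hom.ext_val fun t => by
    simp only [comp_toOrderHom, OrderHom.comp_coe, Function.comp_apply, shiftMap_apply_val,
      σ_apply_val]
    grind

lemma shiftMap_comp_δ {k m n : ℕ} (i : Fin (k + 1)) (h : m + k ≤ n) :
    shiftMap k m n h ≫ δ (Fin.castSucc ⟨m + i, by omega⟩) =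
      δ i.castSucc ≫ shiftMap (k + 1) m (n + 1) (by omega) :=
  Hom.ext_val fun t => by
    simp only [comp_toOrderHom, OrderHom.comp_coe, Function.comp_apply, shiftMap_apply_val,
      δ_apply_val, Fin.val_castSucc]
    grind

lemma isPushout_σ_shiftMap {k m n : ℕ} (i : Fin (k + 1)) (h : m + k ≤ n) :
    IsPushout (σ i) (shiftMap (k + 1) m (n + 1) (by omega)) (shiftMap k m n h)
      (σ ⟨m + i, by omega⟩) := by
  refine IsPushout.of_isColimit' ⟨σ_comp_shiftMap i h⟩ <|
    PushoutCocone.IsColimit.mk _ (fun s => δ (Fin.castSucc ⟨m + i, by omega⟩) ≫ s.inr)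
      (fun s => ?_) (fun s => σ_comp_δ_castSucc_comp _ _ ?_) (fun s u _ hu => ?_)
  · rw [← Category.assoc, shiftMap_comp_δ, Category.assoc, ← s.condition, ← Category.assoc,
      δ_comp_σ_self, Category.id_comp]
  · -- `s.inr` identifies `m + i` and `m + i + 1` because `σ i` identifies `i` and `i + 1`.
    have hcast := congr_toOrderHom_apply s.condition i.castSucc
    have hsucc := congr_toOrderHom_apply s.condition i.succ
    simp only [comp_toOrderHom, OrderHom.comp_coe, Function.comp_apply] at hcast hsucc
    have e_cast : (shiftMap (k + 1) m (n + 1) (by omega)).toOrderHom i.castSucc =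
        (⟨m + i, by omega⟩ : Fin (n + 1)).castSucc := Fin.ext (by simp)
    have e_succ : (shiftMap (k + 1) m (n + 1) (by omega)).toOrderHom i.succ =
        (⟨m + i, by omega⟩ : Fin (n + 1)).succ := Fin.ext (by simp [Nat.add_assoc])
    rw [← e_cast, ← e_succ, ← hcast, ← hsucc]
    simp [σ]
  · rw [← hu, ← Category.assoc, δ_comp_σ_self, Category.id_comp]

lemma isPushout_σ_principalEdge (n : ℕ) (i : Fin (n + 1)) :
    IsPushout (σ 0) (principalEdge (n + 1) i) (vertexMap n i) (σ i) := by
  rw [principalEdge_eq_shiftMap, vertexMap_eq_shiftMap]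
  exact isPushout_σ_shiftMap 0 (by omega)

lemma isPullback_σ_map_shiftMap {X : SSet}
    (H : ∀ (n : ℕ) (i : Fin (n + 1)),
      IsPullback (X.σ i) (X.map (vertexMap n i).op)
        (X.map (principalEdge (n + 1) i).op) (X.σ (0 : Fin 1)))
    {k m n : ℕ} (i : Fin (k + 1)) (h : m + k ≤ n) :
    IsPullback (X.σ ⟨m + i, by omega⟩) (X.map (shiftMap k m n h).op)
      (X.map (shiftMap (k + 1) m (n + 1) (by omega)).op) (X.σ i) := by
  refine IsPullback.of_bot ?_ ?_ (H k i)
  · have hstacked := H n ⟨m + i, by omega⟩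
    rwa [← vertexMap_comp_shiftMap i h, ← principalEdge_comp_shiftMap i (by omega), op_comp,
      op_comp, X.map_comp, X.map_comp] at hstacked
  · simp only [SimplicialObject.σ, ← X.map_comp, ← op_comp, σ_comp_shiftMap]

theorem statement9 (X : SSet) :
    Stiff X ↔ ∀ (n : ℕ) (i : Fin (n + 1)),
      IsPullback (X.σ i) (X.map (vertexMap n i).op)
        (X.map (principalEdge (n + 1) i).op) (X.σ (0 : Fin 1)) := by
  refine ⟨fun hX n i => ?_, fun H k i c d f h j hf hpo => ?_⟩
  · exact (hX 0 0 _ _ _ (isFree_shiftMap 1 i (n + 1) i.isLt)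
      (isPushout_σ_principalEdge n i)).flip
  induction c using SimplexCategory.rec with | _ L =>
  obtain ⟨m, hm, rfl⟩ := hf.exists_eq_shiftMap
  obtain _ | n := L
  · omega
  exact hpo.isPullback_map_op_of_isPushout X (isPushout_σ_shiftMap i (by omega))
    (isPullback_σ_map_shiftMap H i (by omega)).flip
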